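/- arXiv:0809.0141 — 2 statements merged into one kernel-verified Lean document; each statement's English description precedes it below -/
import Mathlib

section
/- Fix an integer t ≥ 1, let R_t(r) = Σ_{i=0}^t r^i/i!, and for y ∈ (0,t) let r_0(y) be the unique positive solution of r·R_t'(r)/R_t(r) = y. Then as y → t from below, the derivative of r_0 satisfies dr_0/dy = (r_0(y)^2/t)·(1 + O(1/r_0(y))); that is, (t/r_0(y)^2)·(dr_0/dy) − 1 = O(1/r_0(y)) as y ↑ t. -/
open Filter Asymptotics Set

/-- `R_t(r) = Σ_{i=0}^t r^i / i!`. -/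
noncomputable def Rt (t : ℕ) (r : ℝ) : ℝ :=
  ∑ i ∈ Finset.range (t + 1), r ^ i / (i.factorial : ℝ)

/-- `F_t(r) = r · R_t'(r) / R_t(r)`. -/
noncomputable def Ft (t : ℕ) (r : ℝ) : ℝ := r * deriv (Rt t) r / Rt t r

/-!
With weights `w i = r ^ i / i!` (`i ≤ t`), `Ft t r = Σ i w i / Σ w i` is the mean of the
Poisson(`r`) law conditioned on `{0, …, t}`, and since `r · (d/dr) w i = i · w i`, `r · Ft' t r`
is its variance `V r`. The variance is positive, so `Ft t` is strictly increasing, `r0` is its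
inverse near `t`, with `r0' = 1 / Ft' t (r0 y)`, and `r0 y → ∞` as `y ↑ t`. Measured from the top,
through the gaps `t - i`, `V = (B P - A²) / P²` with `P = Σ w i`, `A = Σ (t - i) w i` and
`B = Σ (t - i)² w i`. Both `A` and `r B - t P` are polynomials of degree `< t` while
`P ≥ r ^ t / t!`, so `r V = t + O(1/r)`, that is `t / (r² Ft' t r) = 1 + O(1/r)`.
-/

open Finset Topology
open scoped Nat

theorem Finset.sq_sum_mul_lt_sum_mul_sum_sq {ι : Type*} {s : Finset ι} {w d : ι → ℝ}
    (hw : ∀ k ∈ s, 0 ≤ w k) {i j : ι} (hi : i ∈ s) (hj : j ∈ s) (hwi : 0 < w i) (hwj : 0 < w j)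
    (hd : d i ≠ d j) :
    (∑ k ∈ s, d k * w k) ^ 2 < (∑ k ∈ s, w k) * ∑ k ∈ s, d k ^ 2 * w k := by
  set W := ∑ k ∈ s, w k
  set S := ∑ k ∈ s, d k * w k
  have hW : 0 < W := lt_of_lt_of_le hwi (single_le_sum hw hi)
  have hsum_sq : W * (W * ∑ k ∈ s, d k ^ 2 * w k - S ^ 2) = ∑ k ∈ s, w k * (d k * W - S) ^ 2 := by
    have expand : ∀ k ∈ s, w k * (d k * W - S) ^ 2
        = W ^ 2 * (d k ^ 2 * w k) - 2 * W * S * (d k * w k) + S ^ 2 * w k :=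
      fun k _ => by ring
    rw [sum_congr rfl expand, sum_add_distrib, sum_sub_distrib, ← mul_sum, ← mul_sum, ← mul_sum]
    ring
  have hpos : 0 < ∑ k ∈ s, w k * (d k * W - S) ^ 2 := by
    have hne : d i * W - S ≠ 0 ∨ d j * W - S ≠ 0 := by
      by_contra! h
      exact hd (mul_right_cancel₀ hW.ne' (by linarith [h.1, h.2]))
    refine sum_pos' (fun k hk => mul_nonneg (hw k hk) (sq_nonneg _)) ?_
    rcases hne with h | h
    · exact ⟨i, hi, by positivity⟩
    · exact ⟨j, hj, by positivity⟩
  rw [← hsum_sq] at hpos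
  nlinarith [pos_of_mul_pos_right hpos hW.le]

theorem StrictMonoOn.continuousAt_of_rightInvOn {f g : ℝ → ℝ} {s U : Set ℝ}
    (hf : StrictMonoOn f s) (hfc : ContinuousOn f s) (hs : IsOpen s) (hU : IsOpen U)
    (hg : MapsTo g U s) (hgf : RightInvOn g f U) {y : ℝ} (hy : y ∈ U) : ContinuousAt g y := by
  have hmono : MonotoneOn g U := fun a ha b hb hab => by
    by_contra! h
    have := hf (hg hb) (hg ha) h
    rw [hgf ha, hgf hb] at this
    linarith
  refine continuousAt_of_monotoneOn_of_image_mem_nhds hmono (hU.mem_nhds hy) ?_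
  have hfU : f ⁻¹' U ∈ 𝓝 (g y) :=
    (hfc.continuousAt (hs.mem_nhds (hg hy))).preimage_mem_nhds
      (by rw [hgf hy]; exact hU.mem_nhds hy)
  exact mem_of_superset (inter_mem (hs.mem_nhds (hg hy)) hfU) fun r ⟨hrs, hrU⟩ =>
    ⟨f r, hrU, hf.injOn (hg hrU) hrs (hgf hrU)⟩

theorem MonotoneOn.tendsto_atTop_of_rightInvOn {f g : ℝ → ℝ} {s U : Set ℝ} {b : ℝ}
    (hf : MonotoneOn f s) (hg : MapsTo g U s) (hgf : RightInvOn g f U) (hU : U ∈ 𝓝[<] b)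
    (hlt : ∀ M, ∃ r ∈ s, M ≤ r ∧ f r < b) : Tendsto g (𝓝[<] b) atTop := by
  refine tendsto_atTop.2 fun M => ?_
  obtain ⟨r, hrs, hMr, hrb⟩ := hlt M
  filter_upwards [hU, Ioo_mem_nhdsLT hrb] with y hyU hy
  by_contra! h
  have := hf (hg hyU) hrs (h.le.trans hMr)
  rw [hgf hyU] at this
  exact (hy.1.trans_le this).false

namespace TruncatedExp

section expSum

noncomputable def expSum (n : ℕ) (c : ℕ → ℝ) (r : ℝ) : ℝ :=
  ∑ i ∈ range n, c i * (r ^ i / i !)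

variable {n : ℕ} {c : ℕ → ℝ}

theorem expSum_succ_of_eq_zero (hc : c n = 0) : expSum (n + 1) c = expSum n c := by
  ext r
  simp [expSum, sum_range_succ, hc]

theorem mul_expSum (r : ℝ) :
    r * expSum n c r = expSum (n + 1) (fun i => i * c (i - 1)) r := by
  rw [expSum, expSum, sum_range_succ', mul_sum]
  simp only [CharP.cast_eq_zero, zero_mul, add_zero, Nat.add_sub_cancel]
  refine sum_congr rfl fun i _ => ?_
  rw [Nat.factorial_succ, pow_succ]
  push_cast
  field_simp

theorem hasDerivAt_expSum {r : ℝ} (hr : r ≠ 0) :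
    HasDerivAt (expSum n c) (expSum n (fun i => i * c i) r / r) r := by
  refine (HasDerivAt.fun_sum (u := range n) fun i _ =>
    ((hasDerivAt_pow i r).div_const (i ! : ℝ)).const_mul (c i)).congr_deriv ?_
  rw [expSum, sum_div]
  refine sum_congr rfl fun i _ => ?_
  rcases i with _ | i
  · simp
  · rw [pow_succ' r i, Nat.add_sub_cancel]
    field_simp

theorem isBigO_expSum : expSum (n + 1) c =O[atTop] (· ^ n) := by
  refine IsBigO.fun_sum (l := atTop) fun i hi => ?_
  have hin : i ≤ n := Nat.lt_succ_iff.mp (mem_range.mp hi)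
  refine IsBigO.const_mul_left (IsBigO.of_bound 1 ?_) (c i)
  filter_upwards [eventually_ge_atTop 1] with r hr
  have hr0 : 0 ≤ r := zero_le_one.trans hr
  rw [one_mul, Real.norm_of_nonneg (by positivity), Real.norm_of_nonneg (by positivity)]
  calc r ^ i / i ! ≤ r ^ i := div_le_self (by positivity) (mod_cast i.factorial_pos)
    _ ≤ r ^ n := pow_le_pow_right₀ hr hin

end expSum

section moments

noncomputable def moment (t k : ℕ) : ℝ → ℝ := expSum (t + 1) fun i => (i : ℝ) ^ k

noncomputable def truncPoissonVar (t : ℕ) (r : ℝ) : ℝ :=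
  (moment t 2 r * moment t 0 r - moment t 1 r ^ 2) / moment t 0 r ^ 2

variable {t k : ℕ} {r : ℝ}

theorem Rt_eq_moment_zero : Rt t = moment t 0 := by
  ext r
  simp [Rt, moment, expSum]

theorem hasDerivAt_moment (hr : r ≠ 0) :
    HasDerivAt (moment t k) (moment t (k + 1) r / r) r := by
  simpa only [moment, ← pow_succ'] using
    hasDerivAt_expSum (n := t + 1) (c := fun i => (i : ℝ) ^ k) hr

theorem pow_div_factorial_le_moment_zero (hr : 0 ≤ r) : r ^ t / t ! ≤ moment t 0 r := by
  rw [← Rt_eq_moment_zero]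
  exact single_le_sum (f := fun i => r ^ i / (i ! : ℝ)) (fun i _ => by positivity)
    (self_mem_range_succ t)

theorem moment_zero_pos (hr : 0 < r) : 0 < moment t 0 r :=
  lt_of_lt_of_le (by positivity) (pow_div_factorial_le_moment_zero hr.le)

theorem Ft_eq_moment_div (hr : r ≠ 0) : Ft t r = moment t 1 r / moment t 0 r := by
  rw [Ft, Rt_eq_moment_zero, (hasDerivAt_moment hr).deriv, mul_div_cancel₀ _ hr]

theorem hasDerivAt_Ft (hr : 0 < r) : HasDerivAt (Ft t) (truncPoissonVar t r / r) r := by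
  have hquot := (hasDerivAt_moment (t := t) (k := 1) hr.ne').div (hasDerivAt_moment (t := t) hr.ne')
    (moment_zero_pos hr).ne'
  have hFt : (fun x => moment t 1 x / moment t 0 x) =ᶠ[𝓝 r] Ft t := by
    filter_upwards [lt_mem_nhds hr] with x hx
    exact (Ft_eq_moment_div hx.ne').symm
  refine (hquot.congr_of_eventuallyEq hFt.symm).congr_deriv ?_
  rw [truncPoissonVar]
  field_simp

theorem truncPoissonVar_pos (ht : 1 ≤ t) (hr : 0 < r) : 0 < truncPoissonVar t r := by
  have hw : ∀ i ∈ range (t + 1), 0 ≤ r ^ i / (i ! : ℝ) := fun i _ => by positivity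
  have hcs := sq_sum_mul_lt_sum_mul_sum_sq (w := fun i => r ^ i / (i ! : ℝ)) (d := fun i => (i : ℝ))
    hw (mem_range.mpr t.succ_pos) (self_mem_range_succ t) (by simp) (by positivity)
    (mod_cast (Nat.one_le_iff_ne_zero.mp ht).symm)
  have hP := moment_zero_pos (t := t) hr
  rw [truncPoissonVar]
  simp only [moment, expSum, pow_zero, one_mul, pow_one] at hP ⊢
  exact div_pos (by linarith) (by positivity)

theorem Ft_lt (ht : 1 ≤ t) (hr : 0 < r) : Ft t r < t := by
  rw [Ft_eq_moment_div hr.ne', div_lt_iff₀ (moment_zero_pos hr)]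
  simp only [moment, expSum, pow_zero, one_mul, pow_one, mul_sum]
  refine sum_lt_sum (fun i hi => ?_) ⟨0, mem_range.mpr t.succ_pos, by simp; omega⟩
  have : (i : ℝ) ≤ t := mod_cast Nat.lt_succ_iff.mp (mem_range.mp hi)
  gcongr

theorem continuousOn_Ft : ContinuousOn (Ft t) (Ioi 0) :=
  fun _ hr => (hasDerivAt_Ft hr).continuousAt.continuousWithinAt

theorem strictMonoOn_Ft (ht : 1 ≤ t) : StrictMonoOn (Ft t) (Ioi 0) := by
  refine strictMonoOn_of_deriv_pos (convex_Ioi 0) continuousOn_Ft fun r hr => ?_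
  rw [interior_Ioi] at hr
  rw [(hasDerivAt_Ft hr).deriv]
  exact div_pos (truncPoissonVar_pos ht hr) hr

noncomputable def gapMoment (t k : ℕ) : ℝ → ℝ := expSum (t + 1) fun i => ((t : ℝ) - i) ^ k

theorem gapMoment_one (r : ℝ) : gapMoment t 1 r = t * moment t 0 r - moment t 1 r := by
  simp only [gapMoment, moment, expSum, mul_sum, ← sum_sub_distrib]
  exact sum_congr rfl fun i _ => by ring

theorem gapMoment_two (r : ℝ) :
    gapMoment t 2 r = t ^ 2 * moment t 0 r - 2 * t * moment t 1 r + moment t 2 r := by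
  simp only [gapMoment, moment, expSum, mul_sum, ← sum_sub_distrib, ← sum_add_distrib]
  exact sum_congr rfl fun i _ => by ring

theorem truncPoissonVar_eq_gapMoment (r : ℝ) : truncPoissonVar t r =
    (gapMoment t 2 r * moment t 0 r - gapMoment t 1 r ^ 2) / moment t 0 r ^ 2 := by
  rw [truncPoissonVar, gapMoment_one, gapMoment_two]
  ring

theorem isBigO_gapMoment_one (s : ℕ) : gapMoment (s + 1) 1 =O[atTop] (· ^ s) := by
  rw [gapMoment, expSum_succ_of_eq_zero (by simp)]
  exact isBigO_expSum

theorem isBigO_mul_gapMoment_two_sub (s : ℕ) :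
    (fun r => r * gapMoment (s + 1) 2 r - (s + 1) * moment (s + 1) 0 r) =O[atTop] (· ^ s) := by
  have hshift : ∀ r, r * gapMoment (s + 1) 2 r - (s + 1) * moment (s + 1) 0 r =
      expSum (s + 1 + 1) (fun i => i * ((s + 1 : ℕ) - ((i - 1 : ℕ) : ℝ)) ^ 2 - (s + 1)) r := by
    intro r
    rw [gapMoment, mul_expSum, expSum_succ_of_eq_zero (by simp)]
    simp only [moment, expSum, mul_sum, ← sum_sub_distrib]
    exact sum_congr rfl fun i _ => by ring
  simp_rw [hshift]
  -- the coefficient of `w (s + 1)` cancels: `r · w s = (s + 1) · w (s + 1)`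
  rw [expSum_succ_of_eq_zero (by push_cast; ring)]
  exact isBigO_expSum

end moments

section asymptotics

theorem isBigO_div_moment_zero {s : ℕ} {f : ℝ → ℝ} (hf : f =O[atTop] (· ^ s)) :
    (fun r => f r / moment (s + 1) 0 r) =O[atTop] (·⁻¹) := by
  have hpow : (· ^ (s + 1)) =O[atTop] moment (s + 1) 0 := by
    refine IsBigO.of_bound ((s + 1) ! : ℝ) ?_
    filter_upwards [eventually_gt_atTop 0] with r hr
    have := pow_div_factorial_le_moment_zero (t := s + 1) hr.le
    rw [Real.norm_of_nonneg (by positivity), Real.norm_of_nonneg (moment_zero_pos hr).le]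
    rwa [div_le_iff₀' (by positivity)] at this
  have hinv := hpow.inv_rev <| by
    filter_upwards [eventually_gt_atTop 0] with r hr h
    exact absurd h (by positivity)
  refine (hf.mul hinv).trans_eventuallyEq ?_
  filter_upwards [eventually_gt_atTop 0] with r hr
  field_simp
  ring

variable {t : ℕ}

theorem isBigO_mul_truncPoissonVar_sub (ht : 1 ≤ t) :
    (fun r => r * truncPoissonVar t r - t) =O[atTop] (·⁻¹) := by
  obtain ⟨s, rfl⟩ := Nat.exists_eq_add_of_le' ht
  have hA := isBigO_div_moment_zero (isBigO_gapMoment_one s)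
  have hA2 : (fun r => r * (gapMoment (s + 1) 1 r / moment (s + 1) 0 r) ^ 2) =O[atTop] (·⁻¹) := by
    refine ((isBigO_refl id atTop).mul (hA.pow 2)).trans_eventuallyEq ?_
    filter_upwards [eventually_gt_atTop 0] with r hr
    simp only [id, inv_pow]
    field_simp
  refine ((isBigO_div_moment_zero (isBigO_mul_gapMoment_two_sub s)).sub hA2).congr' ?_
    EventuallyEq.rfl
  filter_upwards [eventually_gt_atTop 0] with r hr
  have := moment_zero_pos (t := s + 1) hr
  rw [truncPoissonVar_eq_gapMoment]
  field_simp
  push_cast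
  ring

theorem tendsto_mul_truncPoissonVar (ht : 1 ≤ t) :
    Tendsto (fun r => r * truncPoissonVar t r) atTop (𝓝 t) := by
  simpa using ((isBigO_mul_truncPoissonVar_sub ht).trans_tendsto tendsto_inv_atTop_zero).add_const
    (t : ℝ)

theorem isBigO_div_mul_truncPoissonVar_sub_one (ht : 1 ≤ t) :
    (fun r => t / (r * truncPoissonVar t r) - 1) =O[atTop] (·⁻¹) := by
  have hbdd := ((tendsto_mul_truncPoissonVar ht).inv₀ (by positivity)).isBigO_one ℝ
  refine (((isBigO_mul_truncPoissonVar_sub ht).neg_left).mul hbdd).congr' ?_ (by simp)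
  filter_upwards [eventually_gt_atTop 0] with r hr
  have := truncPoissonVar_pos ht hr
  field_simp
  ring

theorem isBigO_deriv_Ft (ht : 1 ≤ t) :
    (fun r => t / r ^ 2 * (deriv (Ft t) r)⁻¹ - 1) =O[atTop] (fun r => 1 / r) := by
  refine (isBigO_div_mul_truncPoissonVar_sub_one ht).congr' ?_ (by simp)
  filter_upwards [eventually_gt_atTop 0] with r hr
  rw [(hasDerivAt_Ft hr).deriv]
  field_simp

end asymptotics

end TruncatedExp

open TruncatedExp

theorem stmt7 (t : ℕ) (ht : 1 ≤ t) (r0 : ℝ → ℝ)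
    (hr0 : ∀ y ∈ Set.Ioo (0 : ℝ) t, 0 < r0 y ∧ Ft t (r0 y) = y) :
    (fun y : ℝ => (t : ℝ) / (r0 y) ^ 2 * deriv r0 y - 1)
      =O[nhdsWithin (t : ℝ) (Set.Iio (t : ℝ))] (fun y : ℝ => 1 / r0 y) := by
  have hmaps : MapsTo r0 (Ioo 0 t) (Ioi 0) := fun y hy => (hr0 y hy).1
  have hinv : RightInvOn r0 (Ft t) (Ioo 0 t) := fun y hy => (hr0 y hy).2
  have hmono := strictMonoOn_Ft ht
  have hlim : Tendsto r0 (𝓝[<] t) atTop :=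
    hmono.monotoneOn.tendsto_atTop_of_rightInvOn hmaps hinv (Ioo_mem_nhdsLT (by positivity))
      fun M => ⟨max M 1, mem_Ioi.mpr (by positivity), le_max_left M 1, Ft_lt ht (by positivity)⟩
  have hderiv : ∀ y ∈ Ioo 0 (t : ℝ), deriv r0 y = (deriv (Ft t) (r0 y))⁻¹ := fun y hy => by
    have hF := hasDerivAt_Ft (t := t) (hmaps hy)
    rw [hF.deriv]
    refine (HasDerivAt.of_local_left_inverse ?_ hF ?_ ?_).deriv
    · exact hmono.continuousAt_of_rightInvOn continuousOn_Ft isOpen_Ioi isOpen_Ioo hmaps hinv hy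
    · exact (div_pos (truncPoissonVar_pos ht (hmaps hy)) (hmaps hy)).ne'
    · filter_upwards [isOpen_Ioo.mem_nhds hy] with z hz using hinv hz
  refine ((isBigO_deriv_Ft ht).comp_tendsto hlim).congr' ?_ EventuallyEq.rfl
  filter_upwards [Ioo_mem_nhdsLT (by positivity : (0 : ℝ) < t)] with y hy
  simp [hderiv y hy]
end

section
/- Fix an integer t ≥ 1, let R_t(r) = Σ_{i=0}^t r^i/i!, for y ∈ (0,t) let r_0(y) be the unique positive solution of r·R_t'(r)/R_t(r) = y, and let s(y) := r_0(y)·(d/dx)[x·R_t'(x)/R_t(x)] at x = r_0(y). Then as y → t from below, s(y) = (t/r_0(y))·(1 + O(1/r_0(y))); that is, (r_0(y)/t)·s(y) − 1 = O(1/r_0(y)) as y ↑ t. -/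
open Filter Asymptotics Set

/-- `s(y) = r_0(y) · (d/dx)[x R_t'(x)/R_t(x)]|_{x = r_0(y)}`. -/
noncomputable def sfun (t : ℕ) (r0 : ℝ → ℝ) (y : ℝ) : ℝ :=
  r0 y * deriv (Ft t) (r0 y)

/-!
Put `x = 1/r`. Then `R_t(r) = r^t B(x)` with `B(x) = Σ_{i ≤ t} x^(t-i)/i!` (`reflectRt`), and
differentiating this identity gives `t - F_t(r) = G(x)` with `G(x) = x B'(x)/B(x)`
(`reflectFt`). Since `B(0) = 1/t! ≠ 0`, `G` is analytic at `0`, and the chain rule gives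
`r² F_t'(r) = G'(1/r)`. As `G'(0) = B'(0)/B(0) = t`, differentiability of `G'` at `0` yields
`r² F_t'(r) - t = G'(1/r) - G'(0) = O(1/r)`, which is the claim with `r = r_0(y)`. Finally
`r_0(y) → ∞` as `y ↑ t`: `F_t < t` is continuous on `[0, ∞)`, so it stays below some `c < t`
on each `[0, M]`.
-/

open Polynomial Finset Topology

lemma natCast_mul_pow_sub_one_mul (n : ℕ) (r : ℝ) : n * r ^ (n - 1) * r = n * r ^ n := by
  cases n <;> simp [pow_succ, mul_assoc]

lemma continuous_Rt (t : ℕ) : Continuous (Rt t) := by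
  unfold Rt
  fun_prop

lemma Rt_pos (t : ℕ) {r : ℝ} (hr : 0 ≤ r) : 0 < Rt t r :=
  sum_pos' (fun i _ => by positivity) ⟨0, by simp⟩

lemma mul_deriv_Rt (t : ℕ) (r : ℝ) :
    r * deriv (Rt t) r = ∑ i ∈ range (t + 1), (i : ℝ) * r ^ i / (i.factorial : ℝ) := by
  have h : HasDerivAt (Rt t)
      (∑ i ∈ range (t + 1), (i : ℝ) * r ^ (i - 1) / (i.factorial : ℝ)) r :=
    HasDerivAt.fun_sum fun i _ => by simpa using (hasDerivAt_pow i r).div_const _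
  rw [h.deriv, mul_sum]
  refine sum_congr rfl fun i _ => ?_
  rw [← natCast_mul_pow_sub_one_mul i r]
  ring

lemma continuousOn_Ft (t : ℕ) : ContinuousOn (Ft t) (Ici 0) := by
  have h : ContinuousOn
      (fun r => (∑ i ∈ range (t + 1), (i : ℝ) * r ^ i / i.factorial) / Rt t r) (Ici 0) :=
    (by fun_prop : Continuous _).continuousOn.div (continuous_Rt t).continuousOn
      fun r hr => (Rt_pos t hr).ne'
  exact h.congr fun r _ => by rw [Ft, mul_deriv_Rt]

lemma Ft_lt {t : ℕ} (ht : 0 < t) {r : ℝ} (hr : 0 ≤ r) : Ft t r < t := by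
  rw [Ft, mul_deriv_Rt, div_lt_iff₀ (Rt_pos t hr), Rt, mul_sum]
  refine sum_lt_sum (fun i hi => ?_) ⟨0, by simp, by simpa using ht⟩
  rw [mul_div_assoc]
  gcongr
  exact_mod_cast mem_range_succ_iff.1 hi

lemma exists_lt_forall_Ft_le {t : ℕ} (ht : 0 < t) {M : ℝ} (hM : 0 ≤ M) :
    ∃ c < (t : ℝ), ∀ r ∈ Icc 0 M, Ft t r ≤ c := by
  obtain ⟨z, hz, hmax⟩ := isCompact_Icc.exists_isMaxOn (nonempty_Icc.2 hM)
    ((continuousOn_Ft t).mono Icc_subset_Ici_self)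
  exact ⟨Ft t z, Ft_lt ht hz.1, hmax⟩

lemma tendsto_atTop_of_Ft_eq {t : ℕ} (ht : 0 < t) {r0 : ℝ → ℝ}
    (hr0 : ∀ᶠ y in 𝓝[<] (t : ℝ), 0 ≤ r0 y ∧ Ft t (r0 y) = y) :
    Tendsto r0 (𝓝[<] (t : ℝ)) atTop := by
  refine (atTop_basis' 0).tendsto_right_iff.2 fun M hM => ?_
  obtain ⟨c, hct, hc⟩ := exists_lt_forall_Ft_le ht hM
  filter_upwards [hr0, Ioo_mem_nhdsLT hct] with y ⟨hy0, hFy⟩ hy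
  by_contra! hlt
  linarith [hy.1, hFy ▸ hc (r0 y) ⟨hy0, (not_le.1 hlt).le⟩]

noncomputable def reflectRt (t : ℕ) : ℝ[X] :=
  ∑ i ∈ range (t + 1), C ((i.factorial : ℝ)⁻¹) * X ^ (t - i)

noncomputable def reflectFt (t : ℕ) (x : ℝ) : ℝ :=
  x * (reflectRt t).derivative.eval x / (reflectRt t).eval x

lemma pow_mul_eval_inv_reflectRt (t : ℕ) {r : ℝ} (hr : r ≠ 0) :
    r ^ t * (reflectRt t).eval r⁻¹ = Rt t r := by
  simp only [reflectRt, eval_finsetSum, eval_mul, eval_C, eval_pow, eval_X, mul_sum, Rt]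
  refine sum_congr rfl fun i hi => ?_
  rw [← Nat.add_sub_of_le (mem_range_succ_iff.1 hi), pow_add, Nat.add_sub_cancel_left, inv_pow]
  field_simp

lemma eval_reflectRt_pos (t : ℕ) {x : ℝ} (hx : 0 ≤ x) : 0 < (reflectRt t).eval x := by
  simp only [reflectRt, eval_finsetSum, eval_mul, eval_C, eval_pow, eval_X]
  refine sum_pos' (fun i _ => by positivity) ⟨t, by simp, ?_⟩
  simp only [tsub_self, pow_zero, mul_one]
  positivity

lemma eval_zero_reflectRt (t : ℕ) : (reflectRt t).eval 0 = (t.factorial : ℝ)⁻¹ := by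
  simp only [reflectRt, eval_finsetSum, eval_mul, eval_C, eval_pow, eval_X]
  rw [sum_eq_single t (fun i hi hit => ?_) (by simp)]
  · simp
  · rw [zero_pow (by have := mem_range_succ_iff.1 hi; omega), mul_zero]

lemma eval_zero_derivative_reflectRt (t : ℕ) :
    (reflectRt t).derivative.eval 0 = t * (t.factorial : ℝ)⁻¹ := by
  simp only [reflectRt, derivative_sum, derivative_C_mul_X_pow, eval_finsetSum, eval_mul, eval_C,
    eval_pow, eval_X]
  rw [sum_eq_single (t - 1) (fun i hi hne_pred => ?_) (fun h => by simp at h)]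
  · cases t with
    | zero => simp
    | succ n =>
      simp only [add_tsub_cancel_right, add_tsub_cancel_left, tsub_self, pow_zero, Nat.cast_one,
        mul_one, Nat.cast_add, Nat.factorial_succ, Nat.cast_mul, mul_inv_rev]
      field_simp
  · rcases eq_or_ne i t with rfl | hne
    · simp
    · rw [zero_pow (by have := mem_range_succ_iff.1 hi; omega), mul_zero]

lemma analyticAt_reflectFt (t : ℕ) {x : ℝ} (hx : 0 ≤ x) : AnalyticAt ℝ (reflectFt t) x := by
  have hp : ∀ p : ℝ[X], AnalyticAt ℝ (fun x => p.eval x) x := fun p =>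
    analyticAt_id.aeval_polynomial p
  exact (analyticAt_id.mul (hp _)).div (hp _) (eval_reflectRt_pos t hx).ne'

lemma deriv_reflectFt_zero (t : ℕ) : deriv (reflectFt t) 0 = t := by
  have h : HasDerivAt (reflectFt t) _ 0 :=
    ((hasDerivAt_id' 0).mul ((reflectRt t).derivative.hasDerivAt 0)).div
      ((reflectRt t).hasDerivAt 0) (eval_reflectRt_pos t le_rfl).ne'
  rw [h.deriv]
  simp only [eval_zero_derivative_reflectRt, eval_zero_reflectRt, one_mul, zero_mul, add_zero,
    Pi.mul_apply, sub_zero, inv_pow, div_inv_eq_mul]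
  field_simp

lemma Ft_eq_sub_reflectFt (t : ℕ) {r : ℝ} (hr : 0 < r) : Ft t r = t - reflectFt t r⁻¹ := by
  have hR : Rt t =ᶠ[𝓝 r] fun s => s ^ t * (reflectRt t).eval s⁻¹ := by
    filter_upwards [Ioi_mem_nhds hr] with s hs
    exact (pow_mul_eval_inv_reflectRt t (ne_of_gt hs)).symm
  have hd : HasDerivAt (fun s => s ^ t * (reflectRt t).eval s⁻¹) _ r :=
    (hasDerivAt_pow t r).mul (((reflectRt t).hasDerivAt r⁻¹).comp r (hasDerivAt_inv hr.ne'))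
  have hB : (reflectRt t).eval (1 / r) ≠ 0 := (eval_reflectRt_pos t (by positivity)).ne'
  have hpow : (t : ℝ) * r ^ (t - 1) = t * r ^ t / r := by
    rw [eq_div_iff hr.ne', natCast_mul_pow_sub_one_mul]
  rw [Ft, reflectFt, hR.deriv_eq, hd.deriv, ← pow_mul_eval_inv_reflectRt t hr.ne', hpow]
  field_simp
  ring

lemma sq_mul_deriv_Ft (t : ℕ) {r : ℝ} (hr : 0 < r) :
    r ^ 2 * deriv (Ft t) r = deriv (reflectFt t) r⁻¹ := by
  have hF : Ft t =ᶠ[𝓝 r] fun s => t - reflectFt t s⁻¹ := by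
    filter_upwards [Ioi_mem_nhds hr] with s hs
    exact Ft_eq_sub_reflectFt t hs
  have hd : HasDerivAt (fun s => t - reflectFt t s⁻¹) _ r :=
    ((analyticAt_reflectFt t (inv_nonneg.2 hr.le)).differentiableAt.hasDerivAt.comp r
      (hasDerivAt_inv hr.ne')).const_sub (t : ℝ)
  rw [hF.deriv_eq, hd.deriv]
  field_simp

lemma isBigO_sq_mul_deriv_Ft_sub (t : ℕ) :
    (fun r => r ^ 2 * deriv (Ft t) r - t) =O[atTop] fun r => r⁻¹ := by
  have h := (analyticAt_reflectFt t le_rfl).deriv.differentiableAt.isBigO_sub.comp_tendsto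
    tendsto_inv_atTop_zero
  simp only [deriv_reflectFt_zero, sub_zero] at h
  refine h.congr' ?_ EventuallyEq.rfl
  filter_upwards [eventually_gt_atTop 0] with r hr
  simp [sq_mul_deriv_Ft t hr]

theorem stmt8 (t : ℕ) (ht : 1 ≤ t) (r0 : ℝ → ℝ)
    (hr0 : ∀ y ∈ Set.Ioo (0 : ℝ) t, 0 < r0 y ∧ Ft t (r0 y) = y) :
    (fun y : ℝ => r0 y / (t : ℝ) * sfun t r0 y - 1)
      =O[nhdsWithin (t : ℝ) (Set.Iio (t : ℝ))] (fun y : ℝ => 1 / r0 y) := by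
  have ht' : (0 : ℝ) < t := by exact_mod_cast ht
  have hr0_top : Tendsto r0 (𝓝[<] (t : ℝ)) atTop := tendsto_atTop_of_Ft_eq ht <| by
    filter_upwards [Ioo_mem_nhdsLT ht'] with y hy
    exact ⟨(hr0 y hy).1.le, (hr0 y hy).2⟩
  have hO := ((isBigO_sq_mul_deriv_Ft_sub t).comp_tendsto hr0_top).const_mul_left (t : ℝ)⁻¹
  refine hO.congr' ?_ (Eventually.of_forall fun y => (one_div (r0 y)).symm)
  filter_upwards [hr0_top.eventually_gt_atTop 0] with y hy
  simp only [sfun, Function.comp_apply]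
  field_simp
end
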